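/- arXiv:2404.04955 — 3 statements merged into one kernel-verified Lean document; each statement's English description precedes it below -/
import Mathlib

section
/- Let (t_j) be positive reals with t_j → ∞ and j = o(t_j) as j→∞. Put κ(j) = ( (1 + 4j/t_j)^{1/2} − 1 )/2 and G(z) = (1 + 1/z) e^{1/(1+z)} for z>0. Then, as j→∞, Σ_{i=0}^{j} C(j,i) t_j^i / i! ~ (2πj)^{-1/2} (G(κ(j)))^j. -/
open Filter Asymptotics
open scoped Topology

noncomputable section

open Finset Real
open scoped Nat

/-!
Reversing the sum (`i = j - k`) and writing `d = t κ`, so that `d (1 + κ) = j` and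
`d ^ 2 = t (j - d)`, turns `L_j(-t)` into `t ^ j / j !` times a Poisson(`j - d`) average of
`(j (j - 1) ⋯ (j - k + 1) / d ^ k) ^ 2`. Comparing the logarithm of this falling factorial
with the Poisson rate function `I_d(u) = u log (u / d) - u + d` bounds the squared factor
above by `((j + 1) / d) ^ 2 e ^ (2 I_d(j))` and below by
`e ^ (2 I_d(j)) (1 - 2 (k - (j - d)) ^ 2 / d)`. The Poisson mean `j - d = κ d` is `o(d)` and
`o(j)`, so the variance term and the Chebyshev tail vanish and the average is
`∼ e ^ (2 I_d(j) + j - d)`; Stirling's formula turns this into `(2πj) ^ (-1/2) G(κ) ^ j`.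
-/

/-- The Cramér rate function of the Poisson distribution with mean `d`. -/
def poissonRate (d u : ℝ) : ℝ := u * log (u / d) - u + d

section PoissonRate

variable {d u : ℝ}

lemma poissonRate_nonneg (hd : 0 < d) (hu : 0 ≤ u) : 0 ≤ poissonRate d u := by
  rcases hu.eq_or_lt with rfl | hu
  · simp [poissonRate, hd.le]
  have hlog := one_sub_inv_le_log_of_pos (div_pos hu hd)
  rw [inv_div] at hlog
  have hmul : u * (1 - d / u) = u - d := by field_simp
  have := mul_le_mul_of_nonneg_left hlog hu.le
  rw [poissonRate]
  linarith

lemma poissonRate_le_sq_div (hd : 0 < d) (hu : 0 ≤ u) : poissonRate d u ≤ (u - d) ^ 2 / d := by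
  rcases hu.eq_or_lt with rfl | hu
  · simp [poissonRate, sq, hd.ne']
  have hlog := mul_le_mul_of_nonneg_left (log_le_sub_one_of_pos (div_pos hu hd)) hu.le
  have hsq : (u - d) ^ 2 / d = u * (u / d - 1) - u + d := by field_simp; ring
  rw [poissonRate, hsq]
  linarith

/-- `poissonRate d (u + 1) - poissonRate d u` is `∫ log (x / d)` over `[u, u + 1]`, so it lies
between the values of the increasing integrand at the endpoints. -/
lemma poissonRate_succ_sub_eq (hd : 0 < d) (hu : 0 < u) :
    poissonRate d (u + 1) - poissonRate d u = log ((u + 1) / d) + u * log ((u + 1) / u) - 1 := by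
  rw [poissonRate, poissonRate, log_div (by positivity) hu.ne', log_div (by positivity) hd.ne',
    log_div hu.ne' hd.ne']
  ring

lemma poissonRate_succ_sub_le (hd : 0 < d) (hu : 0 ≤ u) :
    poissonRate d (u + 1) - poissonRate d u ≤ log ((u + 1) / d) := by
  rcases hu.eq_or_lt with rfl | hu
  · simp [poissonRate]
  have hlog : u * log ((u + 1) / u) ≤ 1 := by
    have := mul_le_mul_of_nonneg_left (log_le_sub_one_of_pos (by positivity : 0 < (u + 1) / u))
      hu.le
    have hu1 : u * ((u + 1) / u - 1) = 1 := by field_simp; ring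
    linarith
  rw [poissonRate_succ_sub_eq hd hu]
  linarith

lemma log_div_le_poissonRate_succ_sub (hd : 0 < d) (hu : 0 < u) :
    log (u / d) ≤ poissonRate d (u + 1) - poissonRate d u := by
  have hlog : 1 ≤ (u + 1) * log ((u + 1) / u) := by
    have := mul_le_mul_of_nonneg_left (one_sub_inv_le_log_of_pos (by positivity : 0 < (u + 1) / u))
      (by positivity : 0 ≤ u + 1)
    have hu1 : (u + 1) * (1 - ((u + 1) / u)⁻¹) = 1 := by field_simp; ring
    linarith
  rw [poissonRate_succ_sub_eq hd hu, log_div (by positivity) hu.ne', log_div hu.ne' hd.ne',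
    log_div (by positivity) hd.ne']
  rw [log_div (by positivity) hu.ne'] at hlog
  nlinarith

lemma exp_poissonRate_natCast (hd : 0 < d) (j : ℕ) :
    exp (poissonRate d j) = (j / d) ^ j * exp (d - j) := by
  rcases j.eq_zero_or_pos with rfl | hj
  · simp [poissonRate]
  rw [poissonRate, show (j : ℝ) * log (j / d) - j + d = j * log (j / d) + (d - j) by ring,
    exp_add, exp_nat_mul, exp_log (by positivity)]

lemma exp_two_mul_poissonRate_mul_exp (hd : 0 < d) (j : ℕ) :
    exp (2 * poissonRate d j) * exp (j - d) = (j / d) ^ (2 * j) * exp (d - j) := by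
  have hexp : exp (d - j) * exp (d - j) * exp (j - d) = exp (d - j) := by
    rw [← exp_add, ← exp_add]; ring_nf
  rw [two_mul, exp_add, exp_poissonRate_natCast hd, pow_mul', sq]
  linear_combination ((j / d) ^ j) ^ 2 * hexp

end PoissonRate

section DescFactorial

variable {d : ℝ} {j k : ℕ}

lemma log_descFactorial_succ_div_pow (hd : 0 < d) (hk : k < j) :
    log (j.descFactorial (k + 1) / d ^ (k + 1)) =
      log ((j - k) / d) + log (j.descFactorial k / d ^ k) := by
  have hpos : (0 : ℝ) < j.descFactorial k := by exact_mod_cast Nat.descFactorial_pos.2 hk.le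
  have hjk : (0 : ℝ) < j - k := sub_pos.2 (by exact_mod_cast hk)
  rw [← log_mul (by positivity) (by positivity), Nat.descFactorial_succ,
    Nat.cast_mul, Nat.cast_sub hk.le]
  congr 1
  field_simp
  ring

lemma poissonRate_sub_le_log_descFactorial_div_pow (hd : 0 < d) (hk : k ≤ j) :
    poissonRate d j - poissonRate d (j - k) ≤ log (j.descFactorial k / d ^ k) := by
  induction k with
  | zero => simp
  | succ k ih =>
    have hkj : k < j := hk
    have hstep := poissonRate_succ_sub_le hd (u := j - k - 1)
      (by rw [sub_sub, sub_nonneg]; exact_mod_cast hkj)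
    rw [sub_add_cancel] at hstep
    rw [log_descFactorial_succ_div_pow hd hkj]
    push_cast
    rw [show (j : ℝ) - (k + 1) = j - k - 1 by ring]
    linarith [ih hkj.le]

lemma log_descFactorial_div_pow_le_poissonRate_sub (hd : 0 < d) (hk : k ≤ j) :
    log (j.descFactorial k / d ^ k) ≤ poissonRate d (j + 1) - poissonRate d (j - k + 1) := by
  induction k with
  | zero => simp
  | succ k ih =>
    have hkj : k < j := hk
    have hstep := log_div_le_poissonRate_succ_sub hd (u := j - k)
      (sub_pos.2 (by exact_mod_cast hkj))
    rw [log_descFactorial_succ_div_pow hd hkj]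
    push_cast
    rw [show (j : ℝ) - (k + 1) + 1 = j - k by ring]
    linarith [ih hkj.le]

lemma sq_descFactorial_div_pow_le (hd : 0 < d) (hk : k ≤ j) :
    ((j.descFactorial k : ℝ) / d ^ k) ^ 2 ≤ exp (2 * poissonRate d j) * ((j + 1) / d) ^ 2 := by
  have hpos : (0 : ℝ) < j.descFactorial k / d ^ k := by
    have : (0 : ℝ) < j.descFactorial k := by exact_mod_cast Nat.descFactorial_pos.2 hk
    positivity
  have hlog : log (j.descFactorial k / d ^ k) ≤ poissonRate d j + log ((j + 1) / d) := by
    have := log_descFactorial_div_pow_le_poissonRate_sub hd hk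
    have := poissonRate_nonneg hd (u := j - k + 1) (by
      have : (k : ℝ) ≤ j := by exact_mod_cast hk
      linarith)
    have := poissonRate_succ_sub_le hd (u := j) (Nat.cast_nonneg j)
    linarith
  have hle := (log_le_iff_le_exp hpos).1 hlog
  rw [exp_add, exp_log (by positivity)] at hle
  calc ((j.descFactorial k : ℝ) / d ^ k) ^ 2
      ≤ (exp (poissonRate d j) * ((j + 1) / d)) ^ 2 := pow_le_pow_left₀ hpos.le hle 2
    _ = exp (2 * poissonRate d j) * ((j + 1) / d) ^ 2 := by
      rw [mul_pow, ← exp_nat_mul]; push_cast; ring_nf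

lemma exp_mul_one_sub_le_sq_descFactorial_div_pow (hd : 0 < d) (hk : k ≤ j) :
    exp (2 * poissonRate d j) * (1 - 2 * (k - (j - d)) ^ 2 / d) ≤
      ((j.descFactorial k : ℝ) / d ^ k) ^ 2 := by
  have hpos : (0 : ℝ) < j.descFactorial k / d ^ k := by
    have : (0 : ℝ) < j.descFactorial k := by exact_mod_cast Nat.descFactorial_pos.2 hk
    positivity
  have hlog : poissonRate d j - (k - (j - d)) ^ 2 / d ≤ log (j.descFactorial k / d ^ k) := by
    have := poissonRate_sub_le_log_descFactorial_div_pow hd hk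
    have := poissonRate_le_sq_div hd (u := j - k) (by
      have : (k : ℝ) ≤ j := by exact_mod_cast hk
      linarith)
    rw [show ((j : ℝ) - k - d) ^ 2 = (k - (j - d)) ^ 2 by ring] at this
    linarith
  have hle := exp_le_exp.2 hlog
  rw [exp_log hpos] at hle
  calc exp (2 * poissonRate d j) * (1 - 2 * (k - (j - d)) ^ 2 / d)
      ≤ exp (2 * poissonRate d j) * exp (-(2 * (k - (j - d)) ^ 2 / d)) := by
        gcongr
        linarith [add_one_le_exp (-(2 * (k - (j - d)) ^ 2 / d))]
    _ = exp (poissonRate d j - (k - (j - d)) ^ 2 / d) ^ 2 := by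
        rw [← exp_add, ← exp_nat_mul]; push_cast; ring_nf
    _ ≤ ((j.descFactorial k : ℝ) / d ^ k) ^ 2 := pow_le_pow_left₀ (exp_pos _).le hle 2

end DescFactorial

section PoissonSums

lemma sum_range_succ_sq_sub_mul_pow_div_factorial (m : ℝ) (n : ℕ) :
    ∑ k ∈ range (n + 1), (k - m) ^ 2 * (m ^ k / k !) =
      m * ∑ k ∈ range n, m ^ k / k ! + m ^ (n + 1) * (m - n) / n ! := by
  induction n with
  | zero => simp [sq]
  | succ n ih =>
    rw [sum_range_succ, ih, sum_range_succ, Nat.factorial_succ]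
    push_cast
    field_simp
    ring

variable {m : ℝ}

lemma sum_range_sq_sub_mul_pow_div_factorial_le (hm : 0 ≤ m) {n : ℕ} (hmn : m ≤ n) :
    ∑ k ∈ range (n + 1), (k - m) ^ 2 * (m ^ k / k !) ≤ m * exp m := by
  rw [sum_range_succ_sq_sub_mul_pow_div_factorial]
  have hrem : m ^ (n + 1) * (m - n) / n ! ≤ 0 :=
    div_nonpos_of_nonpos_of_nonneg (mul_nonpos_of_nonneg_of_nonpos (by positivity) (by linarith))
      (by positivity)
  nlinarith [sum_le_exp_of_nonneg hm n]

/-- Chebyshev's inequality for the Poisson distribution with mean `m`. -/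
lemma exp_sub_sum_range_pow_div_factorial_le (hm : 0 ≤ m) {n : ℕ} (hmn : m < n) :
    exp m - ∑ k ∈ range n, m ^ k / k ! ≤ m * exp m / (n - m) ^ 2 := by
  have hpartial : ∀ N, n ≤ N → ∑ k ∈ range (N + 1), m ^ k / k ! ≤
      ∑ k ∈ range n, m ^ k / k ! + m * exp m / (n - m) ^ 2 := by
    intro N hN
    rw [← sum_range_add_sum_Ico _ (by omega : n ≤ N + 1), add_le_add_iff_left,
      le_div_iff₀ (by nlinarith)]
    calc (∑ k ∈ Ico n (N + 1), m ^ k / k !) * (n - m) ^ 2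
        = ∑ k ∈ Ico n (N + 1), (n - m) ^ 2 * (m ^ k / k !) := by rw [sum_mul]; simp [mul_comm]
      _ ≤ ∑ k ∈ Ico n (N + 1), (k - m) ^ 2 * (m ^ k / k !) := by
        gcongr with k hk
        exact (mem_Ico.1 hk).1
      _ ≤ ∑ k ∈ range (N + 1), (k - m) ^ 2 * (m ^ k / k !) :=
        sum_le_sum_of_subset_of_nonneg (fun k hk => by simp at hk ⊢; omega)
          (fun _ _ _ => by positivity)
      _ ≤ m * exp m := sum_range_sq_sub_mul_pow_div_factorial_le hm (by
          have : (n : ℝ) ≤ N := by exact_mod_cast hN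
          linarith)
  have hlim : Tendsto (fun N => ∑ k ∈ range (N + 1), m ^ k / k !) atTop (𝓝 (exp m)) := by
    rw [exp_eq_exp_ℝ]
    exact (NormedSpace.expSeries_div_hasSum_exp m).tendsto_sum_nat.comp (tendsto_add_atTop_nat 1)
  linarith [le_of_tendsto hlim (eventually_atTop.2 ⟨n, hpartial⟩)]

lemma tendsto_exp_neg_mul_sum_range_pow_div_factorial {m : ℕ → ℝ}
    (hm : ∀ᶠ j in atTop, 0 ≤ m j) (hmj : Tendsto (fun j => m j / j) atTop (𝓝 0)) :
    Tendsto (fun j => exp (-m j) * ∑ k ∈ range (j + 1), m j ^ k / k !) atTop (𝓝 1) := by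
  have hsmall : ∀ᶠ j : ℕ in atTop, m j / j ≤ 1 / 2 := hmj.eventually_le_const (by norm_num)
  have hlower : ∀ᶠ j : ℕ in atTop,
      1 - 4 * (m j / j) ≤ exp (-m j) * ∑ k ∈ range (j + 1), m j ^ k / k ! := by
    filter_upwards [hm, hsmall, eventually_gt_atTop 0] with j hm hsmall hj'
    have hj : (0 : ℝ) < j := by exact_mod_cast hj'
    rw [div_le_iff₀ hj] at hsmall
    have htail := exp_sub_sum_range_pow_div_factorial_le hm
      (n := j + 1) (by push_cast; linarith)
    have hcheb : m j / ((j + 1 : ℕ) - m j) ^ 2 ≤ 4 * (m j / j) := by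
      have hj1 : (1 : ℝ) ≤ j := by exact_mod_cast hj'
      push_cast
      calc m j / ((j : ℝ) + 1 - m j) ^ 2 ≤ m j / (j / 2) ^ 2 :=
            div_le_div_of_nonneg_left hm (by positivity) (by gcongr; linarith)
        _ = 4 * (m j / j) / j := by field_simp; ring
        _ ≤ 4 * (m j / j) := div_le_self (by positivity) hj1
    calc 1 - 4 * (m j / j)
        = exp (-m j) * (exp (m j) - 4 * (m j / j) * exp (m j)) := by
          have hexp : exp (-m j) * exp (m j) = 1 := by rw [← exp_add]; simp
          linear_combination (4 * (m j / j) - 1) * hexp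
      _ ≤ exp (-m j) * ∑ k ∈ range (j + 1), m j ^ k / k ! := by
          gcongr
          rw [mul_div_right_comm] at htail
          nlinarith [mul_le_mul_of_nonneg_right hcheb (exp_pos (m j)).le]
  have hupper : ∀ᶠ j : ℕ in atTop,
      exp (-m j) * ∑ k ∈ range (j + 1), m j ^ k / k ! ≤ 1 := by
    filter_upwards [hm] with j hm
    calc exp (-m j) * ∑ k ∈ range (j + 1), m j ^ k / k ! ≤ exp (-m j) * exp (m j) := by
          gcongr; exact sum_le_exp_of_nonneg hm _
      _ = 1 := by rw [← exp_add]; simp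
  refine tendsto_of_tendsto_of_tendsto_of_le_of_le' ?_ tendsto_const_nhds hlower hupper
  simpa using (hmj.const_mul 4).const_sub 1

end PoissonSums

def descFactorialPoissonSum (j : ℕ) (d : ℝ) : ℝ :=
  ∑ k ∈ range (j + 1), (j - d) ^ k / k ! * ((j.descFactorial k : ℝ) / d ^ k) ^ 2

section DescFactorialPoissonSum

variable {j : ℕ} {d : ℝ}

lemma sum_choose_mul_pow_div_factorial_eq {t : ℝ} (ht : t ≠ 0) (hd : d ≠ 0)
    (hdt : d ^ 2 = t * (j - d)) :
    ∑ i ∈ range (j + 1), (j.choose i : ℝ) * t ^ i / i ! =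
      t ^ j / j ! * descFactorialPoissonSum j d := by
  rw [descFactorialPoissonSum, ← sum_range_reflect, mul_sum]
  refine sum_congr rfl fun k hk => ?_
  have hk : k ≤ j := Nat.lt_succ_iff.1 (mem_range.1 hk)
  rw [show j + 1 - 1 - k = j - k by omega]
  have hchoose : (j.choose (j - k) : ℝ) * k ! = j.descFactorial k := by
    rw [Nat.choose_symm hk, Nat.descFactorial_eq_factorial_mul_choose]; push_cast; ring
  have hfact : ((j - k) ! : ℝ) * j.descFactorial k = j ! := by
    exact_mod_cast Nat.factorial_mul_descFactorial hk
  have hpow : t ^ j = t ^ (j - k) * t ^ k := by rw [← pow_add, Nat.sub_add_cancel hk]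
  have hm : (d ^ k) ^ 2 = t ^ k * (j - d) ^ k := by
    rw [← pow_mul, mul_comm k, pow_mul, hdt, mul_pow]
  have hdesc : (j.descFactorial k : ℝ) ≠ 0 := by
    exact_mod_cast (Nat.descFactorial_pos.2 hk).ne'
  rw [← hfact, ← hchoose, hpow]
  field_simp
  linear_combination (j.choose (j - k) : ℝ) * hm

lemma descFactorialPoissonSum_le (hd : 0 < d) (hdj : d ≤ j) :
    descFactorialPoissonSum j d ≤ ((j + 1) / d) ^ 2 * ((j / d) ^ (2 * j) * exp (d - j)) := by
  set B := exp (2 * poissonRate d j) * ((j + 1) / d) ^ 2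
  have hm : 0 ≤ (j : ℝ) - d := by linarith
  rw [← exp_two_mul_poissonRate_mul_exp hd]
  calc descFactorialPoissonSum j d ≤ ∑ k ∈ range (j + 1), (j - d) ^ k / k ! * B := by
        refine sum_le_sum fun k hk => ?_
        gcongr
        exact sq_descFactorial_div_pow_le hd (Nat.lt_succ_iff.1 (mem_range.1 hk))
    _ ≤ exp (j - d) * B := by
        rw [← sum_mul]
        gcongr
        exact sum_le_exp_of_nonneg hm _
    _ = ((j + 1) / d) ^ 2 * (exp (2 * poissonRate d j) * exp (j - d)) := by ring

lemma le_descFactorialPoissonSum (hd : 0 < d) (hdj : d ≤ j) :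
    (exp (-(j - d)) * (∑ k ∈ range (j + 1), (j - d) ^ k / k !) - 2 * ((j - d) / d)) *
      ((j / d) ^ (2 * j) * exp (d - j)) ≤ descFactorialPoissonSum j d := by
  set m : ℝ := j - d
  set E := exp (2 * poissonRate d j)
  set F := ∑ k ∈ range (j + 1), m ^ k / k ! with hF
  set V := ∑ k ∈ range (j + 1), (k - m) ^ 2 * (m ^ k / k !) with hV
  have hm : 0 ≤ m := by linarith
  have hexp : exp (-m) * exp m = 1 := by rw [← exp_add]; simp
  have hvar : 2 / d * V ≤ 2 * (m / d) * exp m :=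
    calc 2 / d * V ≤ 2 / d * (m * exp m) := by
          gcongr; exact sum_range_sq_sub_mul_pow_div_factorial_le hm (by linarith)
      _ = 2 * (m / d) * exp m := by ring
  rw [← exp_two_mul_poissonRate_mul_exp hd]
  calc (exp (-m) * F - 2 * (m / d)) * (E * exp m) = E * (F - 2 * (m / d) * exp m) := by
        linear_combination E * F * hexp
    _ ≤ E * (F - 2 / d * V) := by gcongr
    _ = ∑ k ∈ range (j + 1), m ^ k / k ! * (E * (1 - 2 * (k - m) ^ 2 / d)) := by
        simp only [hF, hV, mul_sum, ← sum_sub_distrib]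
        exact sum_congr rfl fun k _ => by ring
    _ ≤ descFactorialPoissonSum j d := by
        refine sum_le_sum fun k hk => ?_
        gcongr
        exact exp_mul_one_sub_le_sq_descFactorial_div_pow hd (Nat.lt_succ_iff.1 (mem_range.1 hk))

end DescFactorialPoissonSum

theorem descFactorialPoissonSum_isEquivalent {d : ℕ → ℝ} (hd : ∀ᶠ j in atTop, 0 < d j)
    (hdj : ∀ᶠ j in atTop, d j ≤ j) (hrel : Tendsto (fun j => (j - d j) / d j) atTop (𝓝 0)) :
    (fun j => descFactorialPoissonSum j (d j)) ~[atTop]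
      fun j => (j / d j) ^ (2 * j) * exp (d j - j) := by
  have hpoisson :
      Tendsto (fun j => exp (-(j - d j)) * ∑ k ∈ range (j + 1), (j - d j) ^ k / k !) atTop
        (𝓝 1) := by
    refine tendsto_exp_neg_mul_sum_range_pow_div_factorial (hdj.mono fun j h => by linarith) ?_
    refine tendsto_of_tendsto_of_tendsto_of_le_of_le' tendsto_const_nhds hrel ?_ ?_
    · filter_upwards [hdj] with j hdj
      exact div_nonneg (by linarith) (Nat.cast_nonneg j)
    · filter_upwards [hd, hdj] with j hd hdj
      exact div_le_div_of_nonneg_left (by linarith) hd hdj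
  have hlower := hpoisson.sub (hrel.const_mul 2)
  have hupper : Tendsto (fun j : ℕ => ((j + 1) / d j) ^ 2) atTop (𝓝 1) := by
    have hprod :=
      ((hrel.const_add 1).mul (tendsto_one_div_atTop_nhds_zero_nat.const_add 1)).pow 2
    simp only [add_zero, mul_one, one_pow] at hprod
    refine hprod.congr' ?_
    filter_upwards [hd, eventually_gt_atTop 0] with j hd hj
    have hj : (j : ℝ) ≠ 0 := by exact_mod_cast hj.ne'
    field_simp
    ring
  rw [mul_zero, sub_zero] at hlower
  refine isEquivalent_of_tendsto_one
    (tendsto_of_tendsto_of_tendsto_of_le_of_le' hlower hupper ?_ ?_)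
  · filter_upwards [hd, hdj] with j hd hdj
    have hj : (0 : ℝ) < j := hd.trans_le hdj
    rw [Pi.div_apply, le_div_iff₀ (by positivity)]
    exact le_descFactorialPoissonSum hd hdj
  · filter_upwards [hd, hdj] with j hd hdj
    have hj : (0 : ℝ) < j := hd.trans_le hdj
    rw [Pi.div_apply, div_le_iff₀ (by positivity)]
    exact descFactorialPoissonSum_le hd hdj

lemma nonneg_and_mul_one_add_eq_of_eq_sqrt {x r : ℝ} (hx : 0 ≤ x)
    (hr : r = (√(1 + 4 * x) - 1) / 2) : 0 ≤ r ∧ r * (1 + r) = x := by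
  have hsq := sq_sqrt (by linarith : (0 : ℝ) ≤ 1 + 4 * x)
  have hone : 1 ≤ √(1 + 4 * x) := by rw [one_le_sqrt]; linarith
  subst hr
  exact ⟨by linarith, by linear_combination hsq / 4⟩

lemma div_pow_div_factorial_isEquivalent :
    (fun n : ℕ => (n / exp 1) ^ n / n !) ~[atTop] fun n => (√(2 * π * n))⁻¹ := by
  refine (IsEquivalent.refl.div Stirling.factorial_isEquivalent_stirling).congr_right ?_
  filter_upwards [eventually_gt_atTop 0] with n hn
  have : ((n : ℝ) / exp 1) ^ n ≠ 0 := by positivity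
  simp only [Pi.div_apply]
  rw [div_mul_cancel_right₀ this, mul_right_comm]

lemma pow_div_factorial_mul_eq {t κ : ℝ} {j : ℕ} (ht : 0 < t) (hκ : 0 < κ)
    (hid : t * κ * (1 + κ) = j) :
    t ^ j / j ! * ((j / (t * κ)) ^ (2 * j) * exp (t * κ - j)) =
      ((1 + 1 / κ) * exp (1 / (1 + κ))) ^ j * ((j / exp 1) ^ j / j !) := by
  have hbase : t * (j / (t * κ)) ^ 2 = (1 + 1 / κ) * j := by rw [← hid]; field_simp; ring
  have hexp : exp (1 / (1 + κ)) ^ j = exp (t * κ) := by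
    rw [← exp_nat_mul, ← hid]; field_simp
  have hpow : t ^ j * (j / (t * κ)) ^ (2 * j) = ((1 + 1 / κ) * j) ^ j := by
    rw [pow_mul, ← mul_pow, hbase]
  have hej : exp (j : ℝ) = exp 1 ^ j := by rw [← exp_nat_mul, mul_one]
  rw [mul_pow, hexp, exp_sub, hej]
  calc t ^ j / j ! * ((j / (t * κ)) ^ (2 * j) * (exp (t * κ) / exp 1 ^ j))
      = t ^ j * (j / (t * κ)) ^ (2 * j) * exp (t * κ) / (exp 1 ^ j * j !) := by ring
    _ = _ := by rw [hpow, mul_pow, div_pow]; ring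

theorem laguerre_asymptotics_sublinear_general
    (t : ℕ → ℝ) (htpos : ∀ j, 0 < t j)
    (hjo : (fun j : ℕ => (j : ℝ)) =o[atTop] t)
    (κ : ℕ → ℝ)
    (hκ : ∀ j : ℕ, κ j = (Real.sqrt (1 + 4 * (j : ℝ) / t j) - 1) / 2)
    (G : ℝ → ℝ)
    (hG : ∀ z : ℝ, G z = (1 + 1 / z) * Real.exp (1 / (1 + z))) :
    (fun j : ℕ => ∑ i ∈ Finset.range (j + 1),
        (j.choose i : ℝ) * t j ^ i / (Nat.factorial i : ℝ))
      ~[atTop] (fun j : ℕ => (Real.sqrt (2 * Real.pi * (j : ℝ)))⁻¹ * (G (κ j)) ^ j) := by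
  have hroot (j : ℕ) : 0 ≤ κ j ∧ κ j * (1 + κ j) = j / t j :=
    nonneg_and_mul_one_add_eq_of_eq_sqrt (div_nonneg j.cast_nonneg (htpos j).le)
      (by rw [hκ, mul_div_assoc])
  have hid (j : ℕ) : t j * κ j * (1 + κ j) = j := by
    rw [mul_assoc, (hroot j).2, mul_div_cancel₀ _ (htpos j).ne']
  have hκpos : ∀ᶠ j in atTop, 0 < κ j := by
    filter_upwards [eventually_gt_atTop 0] with j hj
    have : 0 < κ j * (1 + κ j) := by
      rw [(hroot j).2]; exact div_pos (by exact_mod_cast hj) (htpos j)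
    nlinarith [(hroot j).1]
  have hκ0 : Tendsto κ atTop (𝓝 0) :=
    tendsto_of_tendsto_of_tendsto_of_le_of_le tendsto_const_nhds hjo.tendsto_div_nhds_zero
      (fun j => (hroot j).1) fun j => by nlinarith [hroot j]
  have hY := descFactorialPoissonSum_isEquivalent (d := fun j => t j * κ j)
    (hκpos.mono fun j h => mul_pos (htpos j) h)
    (Eventually.of_forall fun j => by nlinarith [hid j, htpos j, (hroot j).1])
    (hκ0.congr' (hκpos.mono fun j h => by
      dsimp only
      rw [← hid j]; field_simp [(htpos j).ne', h.ne']; ring))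
  have hS : ∀ᶠ j in atTop, ∑ i ∈ range (j + 1), (j.choose i : ℝ) * t j ^ i / i ! =
      t j ^ j / j ! * descFactorialPoissonSum j (t j * κ j) :=
    hκpos.mono fun j h => sum_choose_mul_pow_div_factorial_eq (htpos j).ne'
      (mul_pos (htpos j) h).ne' (by rw [← hid j]; ring)
  have hnorm : ∀ᶠ j in atTop,
      t j ^ j / j ! * ((j / (t j * κ j)) ^ (2 * j) * exp (t j * κ j - j)) =
        G (κ j) ^ j * ((j / exp 1) ^ j / j !) :=
    hκpos.mono fun j h => by rw [hG, pow_div_factorial_mul_eq (htpos j) h (hid j)]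
  refine (((IsEquivalent.refl.mul hY).congr_left (hS.mono fun j h => h.symm)).congr_right
    hnorm).trans ?_
  exact (IsEquivalent.refl.mul div_pow_div_factorial_isEquivalent).congr_right
    (Eventually.of_forall fun j => mul_comm _ _)

/-- Perron-type asymptotics for the Laguerre polynomials `L_j(-t_j) = Σ C(j,i) t_j^i/i!`
in the regime `j → ∞`, `j = o(t_j)`. -/
theorem laguerre_asymptotics_sublinear
    (t : ℕ → ℝ) (htpos : ∀ j, 0 < t j) (ht : Tendsto t atTop atTop)
    (hjo : (fun j : ℕ => (j : ℝ)) =o[atTop] t)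
    (κ : ℕ → ℝ)
    (hκ : ∀ j : ℕ, κ j = (Real.sqrt (1 + 4 * (j : ℝ) / t j) - 1) / 2)
    (G : ℝ → ℝ)
    (hG : ∀ z : ℝ, G z = (1 + 1 / z) * Real.exp (1 / (1 + z))) :
    (fun j : ℕ => ∑ i ∈ Finset.range (j + 1),
        (j.choose i : ℝ) * t j ^ i / (Nat.factorial i : ℝ))
      ~[atTop] (fun j : ℕ => (Real.sqrt (2 * Real.pi * (j : ℝ)))⁻¹ * (G (κ j)) ^ j) :=
  laguerre_asymptotics_sublinear_general t htpos hjo κ hκ G hG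
end
end

section
/- Let (s_j) be a sequence of positive reals with s_j → ∞ such that s_j = o(e^{γ j}) as j→∞ for every γ>0. Then, as j→∞, ∫_0^{s_j} y^{j−1} e^{y} dy ~ s_j^{j} e^{s_j} / (s_j + j). Equivalently, for V(x)=e^{ax}−1 (a>0) and t_j = s_j/a, V^{*(j)}(t_j) = (1/(j−1)!)∫_0^{a t_j} y^{j−1} e^y dy ~ ((a t_j)^{j−1}/(j−1)!) e^{a t_j} · a t_j/(a t_j + j). -/
open MeasureTheory Filter Set Asymptotics
open scoped Topology ENNReal

noncomputable section

/-- `convPow μ j` is the `j`-fold convolution power of the measure `μ` on `ℝ`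
(with `convPow μ 0` the Dirac mass at `0`). -/
def convPow (μ : Measure ℝ) : ℕ → Measure ℝ
  | 0 => Measure.dirac 0
  | n + 1 => ((convPow μ n).prod μ).map fun p => p.1 + p.2

/-!
Writing `I_k(s) = ∫_0^s y^k e^y dy`, integration by parts gives
`I_{k+1}(s) = s^{k+1} e^s - (k+1) I_k(s)`, hence
`(s + k + 1) I_k(s) = s^{k+1} e^s + ∫_0^s (s - y) y^k e^y dy`,
and the last integral lies between `0` and `s^k e^s`. So `I_k(s)` exceeds
`s^{k+1} e^s / (s + k + 1)` by at most a factor `1 + 1/s`, uniformly in `k`.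

The measure `dV` has density `a e^{ax}` on `(0, ∞)`; since `e^{ay} e^{a(x-y)} = e^{ax}`, its
`(k+1)`-fold convolution power has density `a^{k+1} x^k e^{ax} / k!`, whose integral over `[0, t]`
is `I_k(a t) / k!`.
-/

open Real Nat

lemma integral_pow_succ_mul_exp (k : ℕ) (s : ℝ) :
    ∫ y in (0 : ℝ)..s, y ^ (k + 1) * exp y
      = s ^ (k + 1) * exp s - (k + 1) * ∫ y in (0 : ℝ)..s, y ^ k * exp y := by
  rw [intervalIntegral.integral_mul_deriv_eq_deriv_mul (u' := fun y => (k + 1) * y ^ k)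
    (fun y _ => by simpa using hasDerivAt_pow (k + 1) y) (fun y _ => hasDerivAt_exp y)
    (Continuous.intervalIntegrable (by fun_prop) _ _)
    (Continuous.intervalIntegrable (by fun_prop) _ _), ← intervalIntegral.integral_const_mul]
  simp [mul_assoc]

lemma integral_sub_mul_exp (s : ℝ) :
    ∫ y in (0 : ℝ)..s, (s - y) * exp y = exp s - 1 - s := by
  rw [intervalIntegral.integral_mul_deriv_eq_deriv_mul (u' := fun _ => -1)
    (fun y _ => by simpa using (hasDerivAt_id y).const_sub s) (fun y _ => hasDerivAt_exp y)
    (Continuous.intervalIntegrable (by fun_prop) _ _)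
    (Continuous.intervalIntegrable (by fun_prop) _ _)]
  simp only [sub_self, zero_mul, sub_zero, exp_zero, mul_one, zero_sub, neg_mul, one_mul,
    intervalIntegral.integral_neg, integral_exp, neg_sub]
  ring

lemma add_mul_integral_pow_mul_exp (k : ℕ) (s : ℝ) :
    (s + (k + 1)) * ∫ y in (0 : ℝ)..s, y ^ k * exp y
      = s ^ (k + 1) * exp s + ∫ y in (0 : ℝ)..s, (s - y) * (y ^ k * exp y) := by
  have hsplit : (fun y => (s - y) * (y ^ k * exp y))
      = fun y => s * (y ^ k * exp y) - y ^ (k + 1) * exp y := by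
    ext y; ring
  rw [hsplit, intervalIntegral.integral_sub (Continuous.intervalIntegrable (by fun_prop) _ _)
    (Continuous.intervalIntegrable (by fun_prop) _ _), intervalIntegral.integral_const_mul,
    integral_pow_succ_mul_exp]
  ring

lemma integral_sub_mul_pow_mul_exp_nonneg (k : ℕ) {s : ℝ} (hs : 0 ≤ s) :
    0 ≤ ∫ y in (0 : ℝ)..s, (s - y) * (y ^ k * exp y) :=
  intervalIntegral.integral_nonneg hs fun y hy => by
    have : 0 ≤ s - y := sub_nonneg.2 hy.2
    have : 0 ≤ y ^ k := pow_nonneg hy.1 k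
    positivity

lemma integral_sub_mul_pow_mul_exp_le (k : ℕ) {s : ℝ} (hs : 0 ≤ s) :
    ∫ y in (0 : ℝ)..s, (s - y) * (y ^ k * exp y) ≤ s ^ k * exp s := by
  calc ∫ y in (0 : ℝ)..s, (s - y) * (y ^ k * exp y)
      ≤ ∫ y in (0 : ℝ)..s, s ^ k * ((s - y) * exp y) := by
        refine intervalIntegral.integral_mono_on hs
          (Continuous.intervalIntegrable (by fun_prop) _ _)
          (Continuous.intervalIntegrable (by fun_prop) _ _) fun y hy => ?_
        have : y ^ k ≤ s ^ k := pow_le_pow_left₀ hy.1 hy.2 k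
        have : 0 ≤ s - y := sub_nonneg.2 hy.2
        calc (s - y) * (y ^ k * exp y) = y ^ k * ((s - y) * exp y) := by ring
          _ ≤ s ^ k * ((s - y) * exp y) := by gcongr
    _ = s ^ k * (exp s - 1 - s) := by rw [intervalIntegral.integral_const_mul, integral_sub_mul_exp]
    _ ≤ s ^ k * exp s := by
        have : 0 ≤ s ^ k := pow_nonneg hs k
        nlinarith

lemma integral_pow_mul_exp_sub_mem_Icc (k : ℕ) {s : ℝ} (hs : 0 < s) :
    (∫ y in (0 : ℝ)..s, y ^ k * exp y) - s ^ (k + 1) * exp s / (s + (k + 1))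
      ∈ Icc 0 (s ^ (k + 1) * exp s / (s + (k + 1)) / s) := by
  have hden : 0 < s + (k + 1) := by positivity
  have hdiff : (∫ y in (0 : ℝ)..s, y ^ k * exp y) - s ^ (k + 1) * exp s / (s + (k + 1))
      = (∫ y in (0 : ℝ)..s, (s - y) * (y ^ k * exp y)) / (s + (k + 1)) := by
    rw [eq_div_iff hden.ne', sub_mul, div_mul_cancel₀ _ hden.ne', mul_comm,
      add_mul_integral_pow_mul_exp]
    ring
  have hmain : s ^ (k + 1) * exp s / (s + (k + 1)) / s = s ^ k * exp s / (s + (k + 1)) := by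
    field_simp
    ring
  rw [hdiff, hmain]
  exact ⟨div_nonneg (integral_sub_mul_pow_mul_exp_nonneg k hs.le) hden.le,
    div_le_div_of_nonneg_right (integral_sub_mul_pow_mul_exp_le k hs.le) hden.le⟩

theorem isEquivalent_integral_pow_mul_exp {ι : Type*} {l : Filter ι} {s : ι → ℝ}
    (hs : Tendsto s l atTop) (k : ι → ℕ) :
    (fun i => ∫ y in (0 : ℝ)..s i, y ^ k i * exp y) ~[l]
      fun i => s i ^ (k i + 1) * exp (s i) / (s i + (k i + 1)) := by
  set M := fun i => s i ^ (k i + 1) * exp (s i) / (s i + (k i + 1))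
  have hbound :
      (fun i => (∫ y in (0 : ℝ)..s i, y ^ k i * exp y) - M i) =O[l] fun i => M i / s i :=
    IsBigO.of_bound' <| (hs.eventually_gt_atTop 0).mono fun i hi => by
      obtain ⟨h0, h1⟩ := integral_pow_mul_exp_sub_mem_Icc (k i) hi
      rw [norm_of_nonneg h0, norm_of_nonneg (h0.trans h1)]
      exact h1
  have hsmall : (fun i => M i / s i) =o[l] M := by
    simpa [div_eq_mul_inv] using
      (isBigO_refl M l).mul_isLittleO (isLittleO_one_iff ℝ |>.2 hs.inv_tendsto_atTop)
  exact hbound.trans_isLittleO hsmall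

def expPowDensity (a : ℝ) (n : ℕ) : ℝ → ℝ≥0∞ :=
  (Ioi 0).indicator fun x => ENNReal.ofReal (a ^ (n + 1) * x ^ n / n ! * exp (a * x))

lemma measurable_expPowDensity (a : ℝ) (n : ℕ) : Measurable (expPowDensity a n) :=
  (ENNReal.measurable_ofReal.comp (by fun_prop)).indicator measurableSet_Ioi

lemma lintegral_Ioc_ofReal_mul_exp {a : ℝ} (ha : 0 ≤ a) {u v : ℝ} (huv : u ≤ v) :
    ∫⁻ x in Ioc u v, ENNReal.ofReal (a * exp (a * x))
      = ENNReal.ofReal (exp (a * v) - exp (a * u)) := by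
  have hderiv : ∀ x ∈ uIcc u v, HasDerivAt (fun x => exp (a * x)) (a * exp (a * x)) x :=
    fun x _ => by simpa [mul_comm] using ((hasDerivAt_id x).const_mul a).exp
  rw [← ofReal_integral_eq_lintegral_ofReal (Continuous.integrableOn_Ioc (by fun_prop))
      (ae_of_all _ fun x => by positivity), ← intervalIntegral.integral_of_le huv,
    intervalIntegral.integral_eq_sub_of_hasDerivAt hderiv
      (Continuous.intervalIntegrable (by fun_prop) _ _)]

lemma StieltjesFunction.measure_eq_withDensity_expPowDensity {a : ℝ} (ha : 0 ≤ a)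
    {V : StieltjesFunction ℝ} (hV : ∀ x, V x = if 0 ≤ x then exp (a * x) - 1 else 0) :
    V.measure = volume.withDensity (expPowDensity a 0) := by
  have hV' : ∀ x, V x = exp (a * max x 0) - 1 := fun x => by
    rcases le_or_gt 0 x with hx | hx
    · simp [hV, hx]
    · simp [hV, hx.not_ge, hx.le]
  refine Measure.ext_of_Ioc _ _ fun c b hcb => ?_
  rw [StieltjesFunction.measure_Ioc, withDensity_apply _ measurableSet_Ioc, expPowDensity,
    lintegral_indicator _root_.measurableSet_Ioi,
    Measure.restrict_restrict _root_.measurableSet_Ioi,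
    inter_comm, Ioc_inter_Ioi, hV', hV']
  simp only [zero_add, pow_one, pow_zero, mul_one, factorial_zero, cast_one, div_one]
  rcases le_total b 0 with hb | hb
  · rw [Ioc_eq_empty (by simp [hb]), max_eq_right hb, max_eq_right (hcb.le.trans hb)]
    simp
  · rw [lintegral_Ioc_ofReal_mul_exp ha (max_le hcb.le hb), max_eq_left hb]
    congr 1
    ring

lemma expPowDensity_of_nonpos (a : ℝ) (n : ℕ) {x : ℝ} (hx : x ≤ 0) :
    expPowDensity a n x = 0 :=
  indicator_of_notMem (not_lt.2 hx) _

lemma expPowDensity_of_pos (a : ℝ) (n : ℕ) {x : ℝ} (hx : 0 < x) :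
    expPowDensity a n x = ENNReal.ofReal (a ^ (n + 1) * x ^ n / n ! * exp (a * x)) :=
  indicator_of_mem hx _

lemma expPowDensity_mul_expPowDensity_zero {a : ℝ} (ha : 0 ≤ a) (n : ℕ) (x y : ℝ) :
    expPowDensity a n y * expPowDensity a 0 (-y + x)
      = (Ioo 0 x).indicator
          (fun y => ENNReal.ofReal (a ^ (n + 2) / n ! * exp (a * x) * y ^ n)) y := by
  rcases le_or_gt y 0 with hy | hy
  · rw [expPowDensity_of_nonpos a n hy, zero_mul, indicator_of_notMem fun h => hy.not_gt h.1]
  rcases le_or_gt x y with hyx | hyx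
  · rw [expPowDensity_of_nonpos a 0 (by linarith), mul_zero,
      indicator_of_notMem fun h => hyx.not_gt h.2]
  have hexp : exp (a * y) * exp (a * (-y + x)) = exp (a * x) := by rw [← exp_add]; congr 1; ring
  rw [expPowDensity_of_pos a n hy, expPowDensity_of_pos a 0 (by linarith),
    indicator_of_mem (show y ∈ Ioo 0 x from ⟨hy, hyx⟩),
    ← ENNReal.ofReal_mul (by positivity)]
  congr 1
  simp only [pow_zero, factorial_zero, cast_one, div_one, mul_one, zero_add, pow_one]
  linear_combination (a ^ (n + 2) / n ! * y ^ n) * hexp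

lemma expPowDensity_lconvolution {a : ℝ} (ha : 0 ≤ a) (n : ℕ) :
    expPowDensity a n ⋆ₗ expPowDensity a 0 = expPowDensity a (n + 1) := by
  ext x
  simp_rw [lconvolution_def, expPowDensity_mul_expPowDensity_zero ha,
    lintegral_indicator measurableSet_Ioo]
  rcases le_or_gt x 0 with hx | hx
  · rw [Ioo_eq_empty (not_lt.2 hx), Measure.restrict_empty, lintegral_zero_measure,
      expPowDensity_of_nonpos a _ hx]
  have hnonneg : 0 ≤ᵐ[volume.restrict (Ioc 0 x)]
      fun y => a ^ (n + 2) / n ! * exp (a * x) * y ^ n :=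
    (ae_restrict_iff' measurableSet_Ioc).2 (ae_of_all _ fun y hy => by
      have := hy.1.le
      positivity)
  rw [Measure.restrict_congr_set Ioo_ae_eq_Ioc, ← ofReal_integral_eq_lintegral_ofReal
      (Continuous.integrableOn_Ioc (by fun_prop)) hnonneg,
    ← intervalIntegral.integral_of_le hx.le, intervalIntegral.integral_const_mul, integral_pow,
    expPowDensity_of_pos a _ hx, factorial_succ]
  congr 1
  push_cast
  field_simp
  ring

lemma convPow_succ_eq_withDensity {a : ℝ} (ha : 0 ≤ a) {V : StieltjesFunction ℝ}
    (hV : ∀ x, V x = if 0 ≤ x then exp (a * x) - 1 else 0) (n : ℕ) :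
    convPow V.measure (n + 1) = volume.withDensity (expPowDensity a n) := by
  induction n with
  | zero =>
    change Measure.dirac 0 ∗ V.measure = _
    rw [Measure.dirac_zero_conv, V.measure_eq_withDensity_expPowDensity ha hV]
  | succ n ih =>
    change convPow V.measure (n + 1) ∗ V.measure = _
    rw [ih, V.measure_eq_withDensity_expPowDensity ha hV,
      conv_withDensity_eq_lconvolution (measurable_expPowDensity a n)
        (measurable_expPowDensity a 0),
      expPowDensity_lconvolution ha]

lemma withDensity_expPowDensity_Icc_toReal {a : ℝ} (ha : 0 < a) (k : ℕ) {t : ℝ}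
    (ht : 0 ≤ t) :
    (volume.withDensity (expPowDensity a k) (Icc 0 t)).toReal
      = (∫ y in (0 : ℝ)..a * t, y ^ k * exp y) / k ! := by
  have hdensity : ∀ x ∈ Ioc 0 t, expPowDensity a k x
      = ENNReal.ofReal (a / k ! * ((a * x) ^ k * exp (a * x))) := fun x hx => by
    rw [expPowDensity_of_pos a k hx.1, mul_pow]
    ring_nf
  have hnonneg :
      0 ≤ᵐ[volume.restrict (Ioc 0 t)] fun x => a / k ! * ((a * x) ^ k * exp (a * x)) :=
    (ae_restrict_iff' measurableSet_Ioc).2 (ae_of_all _ fun x hx => by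
      have := hx.1.le
      positivity)
  rw [withDensity_apply _ measurableSet_Icc, ← Measure.restrict_congr_set Ioc_ae_eq_Icc,
    setLIntegral_congr_fun measurableSet_Ioc hdensity, ← ofReal_integral_eq_lintegral_ofReal
      (Continuous.integrableOn_Ioc (by fun_prop)) hnonneg,
    ENNReal.toReal_ofReal (integral_nonneg_of_ae hnonneg), ← intervalIntegral.integral_of_le ht,
    intervalIntegral.integral_const_mul,
    intervalIntegral.integral_comp_mul_left (fun y => y ^ k * exp y) ha.ne', mul_zero, smul_eq_mul]
  field_simp

theorem incomplete_gamma_type_asymptotics_general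
    (s : ℕ → ℝ) (hs : Tendsto s atTop atTop)
    (a : ℝ) (ha : 0 < a)
    (V : StieltjesFunction ℝ)
    (hV : ∀ x, V x = if 0 ≤ x then Real.exp (a * x) - 1 else 0)
    (t : ℕ → ℝ) (htdef : ∀ j, t j = s j / a) :
    ((fun j : ℕ => ∫ y in (0 : ℝ)..(s j), y ^ (j - 1) * Real.exp y) ~[atTop]
        fun j : ℕ => s j ^ j * Real.exp (s j) / (s j + (j : ℝ))) ∧
    ((fun j : ℕ => ((convPow V.measure j) (Set.Icc 0 (t j))).toReal) ~[atTop]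
        fun j : ℕ => (a * t j) ^ (j - 1) / (Nat.factorial (j - 1) : ℝ) *
          Real.exp (a * t j) * (a * t j / (a * t j + (j : ℝ)))) := by
  have hat : ∀ j, a * t j = s j := fun j => by rw [htdef]; field_simp
  have hint : (fun j : ℕ => ∫ y in (0 : ℝ)..(s j), y ^ (j - 1) * exp y) ~[atTop]
      fun j : ℕ => s j ^ j * exp (s j) / (s j + j) :=
    (isEquivalent_integral_pow_mul_exp hs (· - 1)).congr_right <|
      (eventually_ge_atTop 1).mono fun j hj => by
        simp only [Nat.sub_add_cancel hj, Nat.cast_sub hj, cast_one, sub_add_cancel]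
  refine ⟨hint, ((hint.div (IsEquivalent.refl (u := fun j => ((j - 1)! : ℝ)))).congr_left ?_)
    |>.congr_right ?_⟩
  · filter_upwards [eventually_ge_atTop 1, hs.eventually_ge_atTop 0] with j hj hsj
    obtain ⟨k, rfl⟩ := Nat.exists_eq_add_of_le' hj
    rw [convPow_succ_eq_withDensity ha.le hV, withDensity_expPowDensity_Icc_toReal ha k
      (by rw [htdef]; positivity), hat]
    rfl
  · filter_upwards [eventually_ge_atTop 1] with j hj
    obtain ⟨k, rfl⟩ := Nat.exists_eq_add_of_le' hj
    simp only [hat, Nat.add_sub_cancel, Pi.div_apply]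
    field_simp
    ring

/-- For `s_j → ∞` growing subexponentially,
`∫_0^{s_j} y^{j-1} e^y dy ~ s_j^j e^{s_j}/(s_j + j)`; equivalently, for
`V(x) = e^{ax} - 1` and `t_j = s_j/a`,
`V^{*(j)}(t_j) ~ ((a t_j)^{j-1}/(j-1)!) e^{a t_j} · a t_j/(a t_j + j)`. -/
theorem incomplete_gamma_type_asymptotics
    (s : ℕ → ℝ) (hspos : ∀ j, 0 < s j) (hs : Tendsto s atTop atTop)
    (hsub : ∀ γ > (0 : ℝ), s =o[atTop] fun j : ℕ => Real.exp (γ * (j : ℝ)))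
    (a : ℝ) (ha : 0 < a)
    (V : StieltjesFunction ℝ)
    (hV : ∀ x, V x = if 0 ≤ x then Real.exp (a * x) - 1 else 0)
    (t : ℕ → ℝ) (htdef : ∀ j, t j = s j / a) :
    ((fun j : ℕ => ∫ y in (0 : ℝ)..(s j), y ^ (j - 1) * Real.exp y) ~[atTop]
        fun j : ℕ => s j ^ j * Real.exp (s j) / (s j + (j : ℝ))) ∧
    ((fun j : ℕ => ((convPow V.measure j) (Set.Icc 0 (t j))).toReal) ~[atTop]
        fun j : ℕ => (a * t j) ^ (j - 1) / (Nat.factorial (j - 1) : ℝ) *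
          Real.exp (a * t j) * (a * t j / (a * t j + (j : ℝ)))) :=
  incomplete_gamma_type_asymptotics_general s hs a ha V hV t htdef
end
end

section
/- Let μ be the Lebesgue–Stieltjes measure of a right-continuous nondecreasing V : ℝ → [0,∞) vanishing on (−∞,0), with V̂(s) = ∫_{[0,∞)} e^{-sx} dμ(x) finite on a neighborhood of a point s in the interior of 𝒟, and let λ(s) = log V̂(s). Let X be a random variable whose distribution is the exponentially tilted probability measure ν_s(dx) = e^{-sx} μ(dx) / V̂(s) on [0,∞); its mean is m_s = −λ'(s). Then E|X − m_s|³ ≤ 4( |λ'(s)|³ + |V̂'''(s)| / V̂(s) ). In particular, with κ(j), a(j), T_j as in the tilting setup, if T_j = o(a(j)) as j→∞ then L_j := j^{-1/2} E| (X'_{j,t} − t_j/j) / (λ''(κ(j)))^{1/2} |³ → 0 as j→∞, where X'_{j,t} has the tilted distribution ν_{κ(j)}. -/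
open MeasureTheory Filter Set Asymptotics
open scoped Topology ENNReal

noncomputable section

/-! Since `μ` lives on `[0, ∞)` and the tilted mean `m = -λ'(s)` is nonnegative,
`|x - m|³ ≤ max(x, m)³ ≤ x³ + m³` on the support, so the third absolute central moment of `ν_s`
is at most `m³ + ∫ x³ dν_s`. Differentiating `V̂(s) = ∫ e^{-sx} dμ` under the integral sign,
which is legitimate because `xⁿ e^{-sx} ≤ n!/δⁿ · e^{-(s-δ)x}` for `x ≥ 0`, identifies
`∫ x³ dν_s = -V̂'''(s)/V̂(s)`. The statement about `L_j` is the same bound after rescaling: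
`L_j ≤ 4 T_j / a(j)`. -/

namespace StieltjesFunction

theorem ae_nonneg_of_eq_zero_of_neg (V : StieltjesFunction ℝ) (hV0 : ∀ x < (0 : ℝ), V x = 0) :
    ∀ᵐ x ∂V.measure, 0 ≤ x := by
  have hbot : Tendsto V atBot (𝓝 0) :=
    tendsto_const_nhds.congr' (EventuallyEq.symm ((eventually_lt_atBot 0).mono hV0))
  have hleft : Function.leftLim V 0 = 0 :=
    leftLim_eq_of_tendsto
      (tendsto_const_nhds.congr' (EventuallyEq.symm (eventually_nhdsWithin_of_forall hV0)))
  have := V.measure_Iio hbot 0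
  rw [hleft, sub_zero, ENNReal.ofReal_zero] at this
  simp only [ae_iff, not_le]
  exact this

theorem measure_ne_zero_of_tendsto_atTop (V : StieltjesFunction ℝ)
    (hV : Tendsto V atTop atTop) : V.measure ≠ 0 := by
  obtain ⟨x, hx⟩ := (hV.eventually_ge_atTop (V 0 + 1)).exists
  intro h
  have := V.measure_Ioc 0 x
  rw [h, Measure.coe_zero, Pi.zero_apply, eq_comm, ENNReal.ofReal_eq_zero] at this
  linarith

end StieltjesFunction

theorem pow_le_factorial_div_pow_mul_exp {x δ : ℝ} (hx : 0 ≤ x) (hδ : 0 < δ) (n : ℕ) :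
    x ^ n ≤ n.factorial / δ ^ n * Real.exp (δ * x) := by
  have h := Real.pow_div_factorial_le_exp (δ * x) (mul_nonneg hδ.le hx) n
  rw [div_le_iff₀ (by positivity)] at h
  rw [div_mul_eq_mul_div, le_div_iff₀ (by positivity)]
  linarith [mul_pow δ x n]

theorem abs_sub_pow_le_pow_add_pow {x m : ℝ} (hx : 0 ≤ x) (hm : 0 ≤ m) (n : ℕ) :
    |x - m| ^ n ≤ x ^ n + m ^ n := by
  have hmax : |x - m| ≤ max x m :=
    abs_sub_le_iff.2 ⟨by linarith [le_max_left x m], by linarith [le_max_right x m]⟩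
  calc |x - m| ^ n ≤ max x m ^ n := by gcongr
    _ ≤ x ^ n + m ^ n := by
      rcases max_choice x m with h | h <;> rw [h] <;> linarith [pow_nonneg hx n, pow_nonneg hm n]

theorem inv_smul_withDensity_exp_eq_tilted {α : Type*} [MeasurableSpace α] {ν : Measure α}
    {f : α → ℝ} (hf : 0 < ∫ x, Real.exp (f x) ∂ν) :
    (ENNReal.ofReal (∫ x, Real.exp (f x) ∂ν))⁻¹ •
      ν.withDensity (fun x => ENNReal.ofReal (Real.exp (f x))) = ν.tilted f := by
  rw [Measure.tilted, ← withDensity_smul' _ _ (by simpa using hf)]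
  congr with x
  rw [Pi.smul_apply, smul_eq_mul, div_eq_inv_mul, ENNReal.ofReal_mul (by positivity),
    ENNReal.ofReal_inv_of_pos hf]

theorem rpow_half_inv_mul_integral_abs_div_sqrt_pow_three_le {ν : Measure ℝ} {m B σ2 j : ℝ}
    (hj : 0 ≤ j) (h : ∫ x, |x - m| ^ 3 ∂ν ≤ 4 * B) :
    (j ^ (1 / 2 : ℝ))⁻¹ * ∫ x, |(x - m) / Real.sqrt σ2| ^ 3 ∂ν
      ≤ 4 * (B / σ2 / Real.sqrt (j * σ2)) := by
  have hσ2 : B / σ2 / (Real.sqrt j * Real.sqrt σ2) = B / (Real.sqrt σ2 ^ 3 * Real.sqrt j) := by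
    rcases le_or_gt σ2 0 with hσ | hσ
    · -- `√σ2 = 0`, so both sides are junk zeros of division by zero
      simp [Real.sqrt_eq_zero'.2 hσ]
    · nth_rw 1 [← Real.sq_sqrt hσ.le]
      ring
  have hscale : ∫ x, |(x - m) / Real.sqrt σ2| ^ 3 ∂ν
      = (∫ x, |x - m| ^ 3 ∂ν) / Real.sqrt σ2 ^ 3 := by
    simp_rw [abs_div, div_pow, abs_of_nonneg (Real.sqrt_nonneg σ2)]
    exact integral_div _ _
  rw [← Real.sqrt_eq_rpow, Real.sqrt_mul hj, hσ2, hscale, inv_mul_eq_div, div_div,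
    mul_div_assoc']
  exact div_le_div_of_nonneg_right h (by positivity)

def laplaceMoment (μ : Measure ℝ) (n : ℕ) (s : ℝ) : ℝ := ∫ x, x ^ n * Real.exp (-s * x) ∂μ

section LaplaceMoment

variable {μ : Measure ℝ} {s s' : ℝ}

theorem laplaceMoment_zero_apply : laplaceMoment μ 0 s = ∫ x, Real.exp (-s * x) ∂μ := by
  simp [laplaceMoment]

theorem integrable_pow_mul_exp_neg_mul (h0 : ∀ᵐ x ∂μ, 0 ≤ x)
    (hint : Integrable (fun x => Real.exp (-s' * x)) μ) (hs : s' < s) (n : ℕ) :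
    Integrable (fun x => x ^ n * Real.exp (-s * x)) μ := by
  refine (hint.const_mul (n.factorial / (s - s') ^ n)).mono' (by fun_prop) ?_
  filter_upwards [h0] with x hx
  rw [Real.norm_of_nonneg (by positivity)]
  calc x ^ n * Real.exp (-s * x)
      ≤ n.factorial / (s - s') ^ n * Real.exp ((s - s') * x) * Real.exp (-s * x) := by
        gcongr
        exact pow_le_factorial_div_pow_mul_exp hx (sub_pos.2 hs) n
    _ = n.factorial / (s - s') ^ n * Real.exp (-s' * x) := by
        rw [mul_assoc, ← Real.exp_add]
        ring_nf

theorem hasDerivAt_laplaceMoment (h0 : ∀ᵐ x ∂μ, 0 ≤ x)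
    (hint : Integrable (fun x => Real.exp (-s' * x)) μ) (hs : s' < s) (n : ℕ) :
    HasDerivAt (laplaceMoment μ n) (-laplaceMoment μ (n + 1) s) s := by
  obtain ⟨r, hr, hrs⟩ := exists_between hs
  have hball : ∀ u ∈ Metric.ball s (s - r), r < u := fun u hu => by
    rw [Metric.mem_ball, Real.dist_eq] at hu
    linarith [neg_abs_le (u - s)]
  have hderiv := hasDerivAt_integral_of_dominated_loc_of_deriv_le
    (F := fun u x => x ^ n * Real.exp (-u * x))
    (F' := fun u x => -(x ^ (n + 1) * Real.exp (-u * x)))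
    (bound := fun x => x ^ (n + 1) * Real.exp (-r * x))
    (Metric.ball_mem_nhds s (by linarith : 0 < s - r))
    (Eventually.of_forall fun u => by fun_prop)
    (integrable_pow_mul_exp_neg_mul h0 hint hs n) (by fun_prop)
    ?_ (integrable_pow_mul_exp_neg_mul h0 hint hr (n + 1)) ?_
  · have := hderiv.2
    rw [integral_neg] at this
    exact this
  · filter_upwards [h0] with x hx u hu
    rw [norm_neg, Real.norm_of_nonneg (by positivity)]
    gcongr
    nlinarith [hball u hu]
  · refine Eventually.of_forall fun x u _ => ?_
    exact ((((hasDerivAt_neg' (x := u)).mul_const x).exp).const_mul (x ^ n)).congr_deriv (by ring)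

theorem iteratedDeriv_laplaceMoment (h0 : ∀ᵐ x ∂μ, 0 ≤ x)
    (hint : Integrable (fun x => Real.exp (-s' * x)) μ) (hs : s' < s) (n k : ℕ) :
    iteratedDeriv k (laplaceMoment μ n) s = (-1) ^ k * laplaceMoment μ (n + k) s := by
  induction k generalizing s with
  | zero => simp
  | succ k ih =>
    have heq : iteratedDeriv k (laplaceMoment μ n) =ᶠ[𝓝 s]
        fun u => (-1) ^ k * laplaceMoment μ (n + k) u :=
      eventually_of_mem (Ioi_mem_nhds hs) fun u hu => ih hu
    rw [iteratedDeriv_succ, heq.deriv_eq,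
      ((hasDerivAt_laplaceMoment h0 hint hs (n + k)).const_mul _).deriv, ← add_assoc, pow_succ]
    ring

theorem laplaceMoment_nonneg (h0 : ∀ᵐ x ∂μ, 0 ≤ x) (n : ℕ) :
    0 ≤ laplaceMoment μ n s :=
  integral_nonneg_of_ae (h0.mono fun x hx => by positivity)

theorem laplaceMoment_zero_pos (hμ : μ ≠ 0) (h0 : ∀ᵐ x ∂μ, 0 ≤ x)
    (hint : Integrable (fun x => Real.exp (-s' * x)) μ) (hs : s' < s) :
    0 < laplaceMoment μ 0 s := by
  have hint0 := integrable_pow_mul_exp_neg_mul h0 hint hs 0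
  simp only [pow_zero, one_mul] at hint0
  rw [laplaceMoment_zero_apply,
    integral_pos_iff_support_of_nonneg (fun x => (Real.exp_pos _).le) hint0]
  simpa [Function.support, (Real.exp_pos _).ne'] using hμ

theorem deriv_log_laplaceMoment_zero (hμ : μ ≠ 0) (h0 : ∀ᵐ x ∂μ, 0 ≤ x)
    (hint : Integrable (fun x => Real.exp (-s' * x)) μ) (hs : s' < s) :
    deriv (fun u => Real.log (laplaceMoment μ 0 u)) s
      = -(laplaceMoment μ 1 s / laplaceMoment μ 0 s) := by
  rw [((hasDerivAt_laplaceMoment h0 hint hs 0).log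
    (laplaceMoment_zero_pos hμ h0 hint hs).ne').deriv, neg_div]

theorem integral_abs_sub_pow_tilted_le (h0 : ∀ᵐ x ∂μ, 0 ≤ x)
    (hint : Integrable (fun x => Real.exp (-s' * x)) μ) (hs : s' < s) {m : ℝ} (hm : 0 ≤ m)
    (n : ℕ) :
    ∫ x, |x - m| ^ n ∂(μ.tilted fun x => -s * x)
      ≤ m ^ n + laplaceMoment μ n s / laplaceMoment μ 0 s := by
  set c := laplaceMoment μ 0 s
  have hc : 0 ≤ c := laplaceMoment_nonneg h0 0
  have hint_n := integrable_pow_mul_exp_neg_mul h0 hint hs n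
  have hint_0 := integrable_pow_mul_exp_neg_mul h0 hint hs 0
  rw [integral_tilted, ← laplaceMoment_zero_apply]
  calc ∫ x, (Real.exp (-s * x) / c) • |x - m| ^ n ∂μ
      ≤ ∫ x, (x ^ n * Real.exp (-s * x) + m ^ n * (x ^ 0 * Real.exp (-s * x))) / c ∂μ := by
        refine integral_mono_of_nonneg (ae_of_all _ fun x => by positivity)
          ((hint_n.add (hint_0.const_mul _)).div_const c) (h0.mono fun x hx => ?_)
        dsimp only
        rw [smul_eq_mul, div_mul_eq_mul_div, pow_zero, one_mul]
        gcongr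
        nlinarith [abs_sub_pow_le_pow_add_pow hx hm n, Real.exp_pos (-s * x)]
    _ = m ^ n * (c / c) + laplaceMoment μ n s / c := by
        rw [integral_div, integral_add hint_n (hint_0.const_mul _), integral_const_mul]
        unfold c laplaceMoment
        ring
    _ ≤ m ^ n + laplaceMoment μ n s / c := by
        gcongr
        exact mul_le_of_le_one_right (by positivity) (div_self_le_one c)

theorem integral_abs_add_deriv_log_laplaceMoment_pow_three_le (hμ : μ ≠ 0)
    (h0 : ∀ᵐ x ∂μ, 0 ≤ x) (hint : Integrable (fun x => Real.exp (-s' * x)) μ) (hs : s' < s) :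
    ∫ x, |x - -deriv (fun u => Real.log (laplaceMoment μ 0 u)) s| ^ 3
        ∂((ENNReal.ofReal (laplaceMoment μ 0 s))⁻¹ •
          μ.withDensity fun x => ENNReal.ofReal (Real.exp (-s * x)))
      ≤ 4 * (|deriv (fun u => Real.log (laplaceMoment μ 0 u)) s| ^ 3
        + |iteratedDeriv 3 (laplaceMoment μ 0) s| / laplaceMoment μ 0 s) := by
  have hpos := laplaceMoment_zero_pos hμ h0 hint hs
  have hm : 0 ≤ laplaceMoment μ 1 s / laplaceMoment μ 0 s :=
    div_nonneg (laplaceMoment_nonneg h0 1) hpos.le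
  have htilt : (ENNReal.ofReal (laplaceMoment μ 0 s))⁻¹ •
      μ.withDensity (fun x => ENNReal.ofReal (Real.exp (-s * x)))
        = μ.tilted fun x => -s * x := by
    rw [laplaceMoment_zero_apply] at hpos ⊢
    exact inv_smul_withDensity_exp_eq_tilted hpos
  have hM3 : 0 ≤ laplaceMoment μ 3 s / laplaceMoment μ 0 s :=
    div_nonneg (laplaceMoment_nonneg h0 3) hpos.le
  rw [htilt, deriv_log_laplaceMoment_zero hμ h0 hint hs, iteratedDeriv_laplaceMoment h0 hint hs,
    neg_neg, abs_neg, abs_of_nonneg hm, abs_mul, abs_pow, abs_neg, abs_one, one_pow, one_mul,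
    abs_of_nonneg (laplaceMoment_nonneg h0 3)]
  linarith [integral_abs_sub_pow_tilted_le h0 hint hs hm 3, pow_nonneg hm 3]

end LaplaceMoment

theorem tilted_third_moment_bound_general
    (V : StieltjesFunction ℝ) (hV0 : ∀ x < (0 : ℝ), V x = 0)
    (hVinf : Tendsto V atTop atTop)
    (μ : Measure ℝ) (hμ : μ = V.measure)
    (D : Set ℝ)
    (hD : D = {s : ℝ | 0 < s ∧ Integrable (fun x => Real.exp (-s * x)) μ})
    (Vhat : ℝ → ℝ) (hVhat : ∀ s, Vhat s = ∫ x, Real.exp (-s * x) ∂μ)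
    (lam : ℝ → ℝ) (hlam : ∀ s, lam s = Real.log (Vhat s))
    -- ν s : the exponentially tilted probability measure
    (ν : ℝ → Measure ℝ)
    (hν : ∀ s, ν s = (ENNReal.ofReal (Vhat s))⁻¹ •
      (μ.withDensity fun x => ENNReal.ofReal (Real.exp (-s * x))))
    -- the tilting setup: t_j, κ(j), a(j), T_j and L_j
    (t : ℕ → ℝ)
    (κ : ℕ → ℝ)
    (hκ : ∀ᶠ j in atTop, κ j ∈ interior D ∧ -deriv lam (κ j) = t j / (j : ℝ))
    (a T L : ℕ → ℝ)
    (ha : ∀ j, a j = Real.sqrt ((j : ℝ) * iteratedDeriv 2 lam (κ j)))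
    (hT : ∀ j, T j = |deriv lam (κ j)| ^ 3 / iteratedDeriv 2 lam (κ j)
        + |iteratedDeriv 3 Vhat (κ j)| / (iteratedDeriv 2 lam (κ j) * Vhat (κ j)))
    (hL : ∀ j : ℕ, L j = ((j : ℝ) ^ ((1 : ℝ) / 2))⁻¹ *
      ∫ x, |(x - t j / (j : ℝ)) / Real.sqrt (iteratedDeriv 2 lam (κ j))| ^ 3 ∂(ν (κ j))) :
    (∀ s ∈ interior D,
        ∫ x, |x - (-deriv lam s)| ^ 3 ∂(ν s)
          ≤ 4 * (|deriv lam s| ^ 3 + |iteratedDeriv 3 Vhat s| / Vhat s)) ∧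
    (T =o[atTop] a → Tendsto L atTop (𝓝 0)) := by
  have h0 : ∀ᵐ x ∂μ, 0 ≤ x := hμ ▸ V.ae_nonneg_of_eq_zero_of_neg hV0
  have hμ0 : μ ≠ 0 := hμ ▸ V.measure_ne_zero_of_tendsto_atTop hVinf
  have hVhat' : Vhat = laplaceMoment μ 0 :=
    funext fun s => (hVhat s).trans laplaceMoment_zero_apply.symm
  have hbound : ∀ s ∈ interior D, ∫ x, |x - (-deriv lam s)| ^ 3 ∂(ν s)
      ≤ 4 * (|deriv lam s| ^ 3 + |iteratedDeriv 3 Vhat s| / Vhat s) := by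
    intro s hs
    obtain ⟨s', hs's, hs'D⟩ := Filter.Eventually.exists_lt (isOpen_interior.mem_nhds hs)
    rw [hD] at hs'D
    rw [hν, funext hlam, hVhat']
    exact integral_abs_add_deriv_log_laplaceMoment_pow_three_le hμ0 h0
      (interior_subset hs'D).2 hs's
  refine ⟨hbound, fun hTa => ?_⟩
  have hlim : Tendsto (fun j => 4 * (T j / a j)) atTop (𝓝 0) := by
    simpa using hTa.tendsto_div_nhds_zero.const_mul 4
  refine squeeze_zero' (Eventually.of_forall fun j => ?_) ?_ hlim
  · rw [hL]
    positivity
  · filter_upwards [hκ] with j ⟨hjD, hjt⟩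
    have hTa_j : T j / a j = (|deriv lam (κ j)| ^ 3 + |iteratedDeriv 3 Vhat (κ j)| / Vhat (κ j))
        / iteratedDeriv 2 lam (κ j) / Real.sqrt (j * iteratedDeriv 2 lam (κ j)) := by
      rw [hT, ha]
      ring
    rw [hL, hTa_j, ← hjt]
    exact rpow_half_inv_mul_integral_abs_div_sqrt_pow_three_le (Nat.cast_nonneg j)
      (hbound _ hjD)

/-- Third-moment bound for the exponentially tilted measure
`ν_s(dx) = e^{-sx} μ(dx)/V̂(s)` (whose mean is `m_s = -λ'(s)`):
`E|X - m_s|³ ≤ 4(|λ'(s)|³ + |V̂'''(s)|/V̂(s))`; consequently, if `T_j = o(a(j))` then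
`L_j = j^{-1/2} E|(X'_{j,t} - t_j/j)/(λ''(κ(j)))^{1/2}|³ → 0`. -/
theorem tilted_third_moment_bound
    (V : StieltjesFunction ℝ) (hV0 : ∀ x < (0 : ℝ), V x = 0)
    (hVinf : Tendsto V atTop atTop)
    (μ : Measure ℝ) (hμ : μ = V.measure)
    (D : Set ℝ)
    (hD : D = {s : ℝ | 0 < s ∧ Integrable (fun x => Real.exp (-s * x)) μ})
    (hDne : D.Nonempty)
    (Vhat : ℝ → ℝ) (hVhat : ∀ s, Vhat s = ∫ x, Real.exp (-s * x) ∂μ)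
    (lam : ℝ → ℝ) (hlam : ∀ s, lam s = Real.log (Vhat s))
    -- ν s : the exponentially tilted probability measure
    (ν : ℝ → Measure ℝ)
    (hν : ∀ s, ν s = (ENNReal.ofReal (Vhat s))⁻¹ •
      (μ.withDensity fun x => ENNReal.ofReal (Real.exp (-s * x))))
    -- the tilting setup: t_j, κ(j), a(j), T_j and L_j
    (t : ℕ → ℝ) (htpos : ∀ j, 0 < t j)
    (κ : ℕ → ℝ)
    (hκ : ∀ᶠ j in atTop, κ j ∈ interior D ∧ -deriv lam (κ j) = t j / (j : ℝ))
    (a T L : ℕ → ℝ)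
    (ha : ∀ j, a j = Real.sqrt ((j : ℝ) * iteratedDeriv 2 lam (κ j)))
    (hT : ∀ j, T j = |deriv lam (κ j)| ^ 3 / iteratedDeriv 2 lam (κ j)
        + |iteratedDeriv 3 Vhat (κ j)| / (iteratedDeriv 2 lam (κ j) * Vhat (κ j)))
    (hL : ∀ j : ℕ, L j = ((j : ℝ) ^ ((1 : ℝ) / 2))⁻¹ *
      ∫ x, |(x - t j / (j : ℝ)) / Real.sqrt (iteratedDeriv 2 lam (κ j))| ^ 3 ∂(ν (κ j))) :
    (∀ s ∈ interior D,
        ∫ x, |x - (-deriv lam s)| ^ 3 ∂(ν s)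
          ≤ 4 * (|deriv lam s| ^ 3 + |iteratedDeriv 3 Vhat s| / Vhat s)) ∧
    (T =o[atTop] a → Tendsto L atTop (𝓝 0)) :=
  tilted_third_moment_bound_general V hV0 hVinf μ hμ D hD Vhat hVhat lam hlam ν hν t κ hκ a T L ha
    hT hL
end
end
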